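/- With f(k) = (2k/(4π))^{k/2} e^{-k/2} · 2π^{(k+1)/2}/Γ((k+1)/2) the entropy of the round k-sphere, one has lim_{k→∞} f(k) = √2. -/

import Mathlib

open Filter

/-- `f k = (2k/(4π))^{k/2} e^{-k/2} · 2π^{(k+1)/2} / Γ((k+1)/2)`, the entropy of the
round `k`-sphere (Stone's computation). -/
noncomputable def sphereEntropy (k : ℕ) : ℝ :=
  (2 * k / (4 * Real.pi)) ^ ((k : ℝ) / 2) * Real.exp (-(k : ℝ) / 2) *
    (2 * Real.pi ^ (((k : ℝ) + 1) / 2) / Real.Gamma (((k : ℝ) + 1) / 2))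

/-!
Squaring removes the half-integer powers: `f(k)² = 4π (k / 2e)^k / Γ(s)²` with `s = (k + 1)/2`.
Legendre's duplication formula `Γ(s) Γ(s + 1/2) = √π k! / 2^k` trades `Γ(s)²` for `k!` and the
ratio `Γ(s + 1/2) / Γ(s)`; Stirling's formula handles `k!`, and log-convexity of `Γ` squeezes the
ratio between `s / √(s + 1/2)` and `√s`. Altogether `f(k)² → 4 · (1/2) = 2`.
-/

open Real Topology
open scoped Nat

namespace Real

theorem Gamma_add_half_sq_le_mul {s : ℝ} (hs : 0 < s) :
    Gamma (s + 1 / 2) ^ 2 ≤ Gamma s * Gamma (s + 1) := by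
  have h := Gamma_mul_add_mul_le_rpow_Gamma_mul_rpow_Gamma hs (by linarith : 0 < s + 1)
    one_half_pos one_half_pos (add_halves 1)
  rw [show 1 / 2 * s + 1 / 2 * (s + 1) = s + 1 / 2 by ring] at h
  calc Gamma (s + 1 / 2) ^ 2
      ≤ (Gamma s ^ (1 / 2 : ℝ) * Gamma (s + 1) ^ (1 / 2 : ℝ)) ^ 2 := by
        gcongr
    _ = Gamma s * Gamma (s + 1) := by
        rw [← sqrt_eq_rpow, ← sqrt_eq_rpow, mul_pow,
          sq_sqrt (Gamma_pos_of_pos hs).le, sq_sqrt (Gamma_pos_of_pos (by linarith)).le]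

theorem Gamma_add_half_sq_le {s : ℝ} (hs : 0 < s) : Gamma (s + 1 / 2) ^ 2 ≤ s * Gamma s ^ 2 := by
  have h := Gamma_add_half_sq_le_mul hs
  rw [Gamma_add_one hs.ne'] at h
  linarith

theorem sq_mul_Gamma_sq_le {s : ℝ} (hs : 0 < s) :
    s ^ 2 * Gamma s ^ 2 ≤ (s + 1 / 2) * Gamma (s + 1 / 2) ^ 2 := by
  have h := Gamma_add_half_sq_le_mul (by linarith : 0 < s + 1 / 2)
  rw [add_assoc, add_halves, Gamma_add_one hs.ne', Gamma_add_one (by linarith)] at h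
  linarith

-- For `u = Γ(s + 1/2) / (Γ s √s)` log-convexity gives `s / (s + 1/2) ≤ u² ≤ 1`, and `u² ≤ u`.
theorem Gamma_add_half_div_Gamma_div_sqrt_mem_Icc {s : ℝ} (hs : 0 < s) :
    Gamma (s + 1 / 2) / Gamma s / √s ∈ Set.Icc (s / (s + 1 / 2)) 1 := by
  set u := Gamma (s + 1 / 2) / Gamma s / √s
  have hΓ := Gamma_pos_of_pos hs
  have hu : 0 < u := by positivity
  have hA : 0 < s * Gamma s ^ 2 := by positivity
  have hu_sq : u ^ 2 * (s * Gamma s ^ 2) = Gamma (s + 1 / 2) ^ 2 := by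
    simp only [u, div_pow, sq_sqrt hs.le]
    field_simp
  have hu_sq_le : u ^ 2 ≤ 1 := le_of_mul_le_mul_right
    (by rw [hu_sq, one_mul]; exact Gamma_add_half_sq_le hs) hA
  have hu_sq_ge : s ≤ (s + 1 / 2) * u ^ 2 := le_of_mul_le_mul_right
    (by rw [mul_assoc, hu_sq, ← mul_assoc, ← sq]; exact sq_mul_Gamma_sq_le hs) hA
  have hu_le : u ≤ 1 := (sq_le_one_iff₀ hu.le).1 hu_sq_le
  refine ⟨?_, hu_le⟩
  rw [div_le_iff₀ (by positivity)]
  nlinarith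

theorem tendsto_Gamma_add_half_div_Gamma_div_sqrt :
    Tendsto (fun s => Gamma (s + 1 / 2) / Gamma s / √s) atTop (𝓝 1) := by
  have hlow : Tendsto (fun s : ℝ => s / (s + 1 / 2)) atTop (𝓝 1) := by
    have h : Tendsto (fun s : ℝ => (1 + 1 / 2 * s⁻¹)⁻¹) atTop (𝓝 1) := by
      simpa using ((tendsto_inv_atTop_zero.const_mul (1 / 2 : ℝ)).const_add 1).inv₀ (by norm_num)
    refine h.congr' ?_
    filter_upwards [eventually_gt_atTop 0] with s hs
    field_simp
  refine tendsto_of_tendsto_of_tendsto_of_le_of_le' hlow tendsto_const_nhds ?_ ?_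
  all_goals filter_upwards [eventually_gt_atTop 0] with s hs
  exacts [(Gamma_add_half_div_Gamma_div_sqrt_mem_Icc hs).1,
    (Gamma_add_half_div_Gamma_div_sqrt_mem_Icc hs).2]

theorem Gamma_mul_Gamma_add_half_natCast_succ_div_two (k : ℕ) :
    Gamma ((k + 1) / 2) * Gamma ((k + 1) / 2 + 1 / 2) = √π * k ! / 2 ^ k := by
  rw [Gamma_mul_Gamma_add_half, show 2 * (((k : ℝ) + 1) / 2) = k + 1 by ring,
    Gamma_nat_eq_factorial, show (1 : ℝ) - (k + 1) = -k by ring, rpow_neg zero_le_two,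
    rpow_natCast]
  ring

end Real

theorem sphereEntropy_sq (k : ℕ) :
    sphereEntropy k ^ 2 = 4 * π * (k / (2 * exp 1)) ^ k / Gamma ((k + 1) / 2) ^ 2 := by
  have hk : (0 : ℝ) ≤ k / (2 * π) := by positivity
  have h1 : ((2 * k / (4 * π)) ^ ((k : ℝ) / 2)) ^ 2 = (k / (2 * π)) ^ k := by
    rw [show 2 * (k : ℝ) / (4 * π) = k / (2 * π) by ring, rpow_div_two_eq_sqrt _ hk, rpow_natCast,
      pow_right_comm, sq_sqrt hk]
  have h2 : (π ^ (((k : ℝ) + 1) / 2)) ^ 2 = π ^ (k + 1) := by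
    rw [rpow_div_two_eq_sqrt _ pi_pos.le, ← Nat.cast_add_one, rpow_natCast, pow_right_comm,
      sq_sqrt pi_pos.le]
  have h3 : exp (-(k : ℝ) / 2) ^ 2 = (exp 1 ^ k)⁻¹ := by
    rw [← exp_nat_mul, exp_one_pow, ← exp_neg]; ring_nf
  rw [sphereEntropy, mul_pow, mul_pow, div_pow, mul_pow, h1, h2, h3]
  simp only [div_pow, mul_pow]
  field_simp
  ring

-- The factorization is chosen so that each factor after the `2` tends to `1`.
theorem sphereEntropy_sq_eq_stirlingSeq_mul_Gamma_ratio {k : ℕ} (hk : k ≠ 0) :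
    sphereEntropy k ^ 2 = 2 * (√π / Stirling.stirlingSeq k) *
      (Gamma ((k + 1) / 2 + 1 / 2) / Gamma ((k + 1) / 2) / √((k + 1) / 2)) * √(1 + 1 / k) := by
  have hk₀ : (0 : ℝ) < k := by positivity
  have hΓ : 0 < Gamma ((k + 1) / 2) := Gamma_pos_of_pos (by positivity)
  have hsqrt : √(1 + 1 / k) = 2 * √((k + 1) / 2) / √(2 * k) := by
    rw [eq_div_iff (by positivity), ← sqrt_mul (by positivity),
      show (1 + 1 / k) * (2 * k) = (2 : ℝ) ^ 2 * ((k + 1) / 2) by field_simp,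
      sqrt_mul (by norm_num), sqrt_sq zero_le_two]
  have hR : Gamma ((k + 1) / 2 + 1 / 2) = √π * k ! / 2 ^ k / Gamma ((k + 1) / 2) := by
    rw [eq_div_iff hΓ.ne', mul_comm, Gamma_mul_Gamma_add_half_natCast_succ_div_two]
  rw [sphereEntropy_sq, hsqrt, hR, Stirling.stirlingSeq]
  field_simp
  rw [sq_sqrt pi_pos.le]
  simp only [div_pow, mul_pow]
  field_simp
  ring

theorem sphereEntropy_nonneg (k : ℕ) : 0 ≤ sphereEntropy k := by
  have := Gamma_pos_of_pos (by positivity : (0 : ℝ) < (k + 1) / 2)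
  unfold sphereEntropy
  positivity

/-- `lim_{k→∞} f(k) = √2`. -/
theorem sphereEntropy_tendsto_sqrt_two :
    Tendsto sphereEntropy atTop (nhds (Real.sqrt 2)) := by
  have hstirling : Tendsto (fun k => √π / Stirling.stirlingSeq k) atTop (𝓝 1) := by
    have hπ : √π ≠ 0 := (sqrt_pos.2 pi_pos).ne'
    have h := (tendsto_const_nhds (x := √π)).div Stirling.tendsto_stirlingSeq_sqrt_pi hπ
    rwa [div_self hπ] at h
  have hhalf : Tendsto (fun k : ℕ => ((k : ℝ) + 1) / 2) atTop atTop :=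
    (tendsto_atTop_add_const_right _ 1 tendsto_natCast_atTop_atTop).atTop_div_const two_pos
  have hsqrt : Tendsto (fun k : ℕ => √(1 + 1 / (k : ℝ))) atTop (𝓝 1) := by
    simpa using (tendsto_one_div_atTop_nhds_zero_nat.const_add 1).sqrt
  have hsq : Tendsto (fun k => sphereEntropy k ^ 2) atTop (𝓝 2) := by
    have h := ((hstirling.const_mul 2).mul
      (tendsto_Gamma_add_half_div_Gamma_div_sqrt.comp hhalf)).mul hsqrt
    rw [mul_one, mul_one, mul_one] at h
    refine h.congr' ?_
    filter_upwards [eventually_ne_atTop 0] with k hk using (sphereEntropy_sq_eq_stirlingSeq_mul_Gamma_ratio hk).symm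
  simpa [sqrt_sq (sphereEntropy_nonneg _)] using hsq.sqrt
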